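/- In the multi-period model with binary valuations (v_{ij} ∈ {0,1} for all i, j) and unit budgets (B_i = 1 for all i), assume there exists a feasible allocation with u_i > 0 for all i. Then a feasible allocation x with u_i(x_i) > 0 for all i is leximin-optimal if and only if it maximizes the Nash welfare Π_i u_i(x_i) over all feasible allocations; i.e., the set of leximin-optimal allocations equals the set of maximum-Nash-welfare allocations in the multi-period sum-utility model. -/

import Mathlib

open Finset

/-- Feasibility of a multi-period allocation: nonnegativity, per-period supply
constraints, and overall supply constraints. -/
def FeasibleMP (n m T : ℕ) (st : Fin m → Fin T → ℝ) (s : Fin m → ℝ)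
    (x : Fin n → Fin m → Fin T → ℝ) : Prop :=
  (∀ i j t, 0 ≤ x i j t) ∧ (∀ j t, ∑ i, x i j t ≤ st j t) ∧
    (∀ j, ∑ t, ∑ i, x i j t ≤ s j)

/-- The value at position `i` of the nondecreasing rearrangement of `v`. -/
noncomputable def sortedVal {n : ℕ} (v : Fin n → ℝ) (i : Fin n) : ℝ :=
  v (Tuple.sort v i)

/-- `v` is leximin-greater than `w`: after sorting both vectors in
nondecreasing order, at the first index where they differ `v` is strictly
larger. -/
noncomputable def LexGt {n : ℕ} (v w : Fin n → ℝ) : Prop :=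
  ∃ k : Fin n, (∀ i : Fin n, i < k → sortedVal v i = sortedVal w i) ∧
    sortedVal w k < sortedVal v k

/-! Only aggregate allocations matter: spreading each buyer's share of an item over the periods
in proportion to the per-period supply shows that the achievable utility vectors are those of a
one-shot allocation with supply `min (s j) (∑ t, st j t)`. For binary valuations this set is
compact, convex and has a transfer-exchange property: if some achievable vector gives buyer `i`
more, then `i` can be raised slightly, either alone or at the expense of a buyer that the other
vector gives less, by shifting items along a path of buyers who all value the item being passed
on. At a maximum of the Nash welfare neither move helps, because a small transfer from a richer to
a poorer buyer raises the product; since every leximin improvement has a gain below all of its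
losses, Nash maxima are leximin-optimal. Conversely, a leximin optimum has the same sorted utility
vector as a Nash maximum, hence the same product. -/

open Filter Topology

section Leximin

variable {n : ℕ}

lemma lexGt_iff_toLex_lt (v w : Fin n → ℝ) :
    LexGt v w ↔ toLex (sortedVal w) < toLex (sortedVal v) :=
  exists_congr fun _ => and_congr_left' (forall₂_congr fun _ _ => eq_comm)

lemma sortedVal_eq_or_lexGt_or_lexGt (v w : Fin n → ℝ) :
    sortedVal v = sortedVal w ∨ LexGt v w ∨ LexGt w v := by
  simp only [lexGt_iff_toLex_lt]
  rcases lt_trichotomy (toLex (sortedVal v)) (toLex (sortedVal w)) with h | h | h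
  · exact Or.inr (Or.inr h)
  · exact Or.inl (toLex.injective h)
  · exact Or.inr (Or.inl h)

lemma prod_sortedVal (v : Fin n → ℝ) : ∏ i, sortedVal v i = ∏ i, v i :=
  Equiv.prod_comp (Tuple.sort v) v

lemma Monotone.mem_iff_lt_card_filter {α : Type*} [Preorder α] {f : Fin n → α}
    (hf : Monotone f) {S : Set α} [DecidablePred (· ∈ S)] (hS : IsLowerSet S) (k : Fin n) :
    f k ∈ S ↔ k.val < #{i | f i ∈ S} := by
  constructor
  · intro hk
    have := card_le_card fun i hi => mem_filter.2 ⟨mem_univ i, hS (hf (mem_Iic.1 hi)) hk⟩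
    rwa [Fin.card_Iic] at this
  · intro hk
    by_contra hkS
    have := card_le_card (s := ({i | f i ∈ S} : Finset (Fin n))) fun i hi =>
      mem_Iio.2 (lt_of_not_ge fun hki => hkS (hS (hf hki) (mem_filter.1 hi).2))
    rw [Fin.card_Iio] at this
    omega

lemma sortedVal_mem_iff (v : Fin n → ℝ) {S : Set ℝ} [DecidablePred (· ∈ S)] (hS : IsLowerSet S)
    (k : Fin n) :
    sortedVal v k ∈ S ↔ k.val < #{i | v i ∈ S} := by
  change (v ∘ Tuple.sort v) k ∈ S ↔ _
  rw [(Tuple.monotone_sort v).mem_iff_lt_card_filter hS k,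
    card_equiv (Tuple.sort v) (t := {i | v i ∈ S}) (by simp)]

lemma sortedVal_lt_iff (v : Fin n → ℝ) (θ : ℝ) (k : Fin n) :
    sortedVal v k < θ ↔ k.val < #{i | v i < θ} := by
  simpa using sortedVal_mem_iff v (isLowerSet_Iio θ) k

lemma sortedVal_le_iff (v : Fin n → ℝ) (θ : ℝ) (k : Fin n) :
    sortedVal v k ≤ θ ↔ k.val < #{i | v i ≤ θ} := by
  simpa using sortedVal_mem_iff v (isLowerSet_Iic θ) k

lemma not_lexGt_of_eq_below {v w : Fin n → ℝ} {θ : ℝ} (hagree : ∀ j, w j < θ → v j = w j)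
    {j₀ : Fin n} (hw : θ ≤ w j₀) (hv : v j₀ < θ) : ¬ LexGt v w := by
  have hj₀ : j₀ ∉ ({j | w j < θ} : Finset (Fin n)) := by simpa using hw
  have hp : #{j | w j < θ} < n := by simpa using card_lt_univ_of_notMem hj₀
  -- At position `K`, the number of entries of `w` below `θ`, the sorted `v` is already below `θ`
  -- while the sorted `w` is not, and before `K` the sorted `v` is pointwise below the sorted `w`.
  set K : Fin n := ⟨_, hp⟩
  have hwK : θ ≤ sortedVal w K := not_lt.1 fun h => lt_irrefl _ ((sortedVal_lt_iff w θ K).1 h)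
  have hvK : sortedVal v K < θ := by
    refine (sortedVal_lt_iff v θ K).2 ?_
    calc K.val < #(insert j₀ ({j | w j < θ} : Finset (Fin n))) := by
          rw [card_insert_of_notMem hj₀]; exact Nat.lt_succ_self _
      _ ≤ _ := card_le_card fun j hj => by
        rcases mem_insert.1 hj with rfl | hj
        · simpa using hv
        · have hj : w j < θ := by simpa using hj
          simpa [hagree j hj] using hj
  have hbelow : ∀ i < K, sortedVal v i ≤ sortedVal w i := by
    intro i hi
    have hwi : sortedVal w i < θ := (sortedVal_lt_iff w θ i).2 hi
    refine (sortedVal_le_iff v _ i).2 ((sortedVal_le_iff w _ i).1 le_rfl |>.trans_le ?_)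
    refine card_le_card fun j hj => ?_
    have hj : w j ≤ sortedVal w i := by simpa using hj
    simpa [hagree j (hj.trans_lt hwi)] using hj
  rintro ⟨k, heq, hlt⟩
  rcases lt_trichotomy k K with h | rfl | h
  · exact (hbelow k h).not_gt hlt
  · linarith
  · linarith [heq K h]

lemma LexGt.exists_gain_below_losses {v w : Fin n → ℝ} (h : LexGt v w) :
    ∃ i, w i < v i ∧ ∀ k, v k < w k → w i < w k := by
  by_contra! hcon
  by_cases hloss : ∃ k, v k < w k
  · obtain ⟨k₀, hk₀, hmin⟩ := exists_min_image ({k | v k < w k} : Finset (Fin n)) w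
      (by simpa [Finset.Nonempty] using hloss)
    have hk₀ : v k₀ < w k₀ := by simpa using hk₀
    refine not_lexGt_of_eq_below (fun j hj => ?_) le_rfl hk₀ h
    rcases lt_trichotomy (v j) (w j) with hl | he | hg
    · exact absurd (hmin j (by simpa using hl)) (not_le.2 hj)
    · exact he
    · obtain ⟨k, hk, hkj⟩ := hcon j hg
      exact absurd (hmin k (by simpa using hk)) (not_le.2 (hkj.trans_lt hj))
  · push Not at hloss
    have hvw : v = w := funext fun i => le_antisymm
      (not_lt.1 fun hg => (hloss _).not_gt (hcon i hg).choose_spec.1) (hloss i)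
    obtain ⟨k, -, hk⟩ := h
    exact lt_irrefl _ (hvw ▸ hk)

end Leximin

section NashWelfare

lemma prod_lt_prod_add_single {ι : Type*} [Fintype ι] [DecidableEq ι] {u : ι → ℝ}
    (hu : ∀ l, 0 < u l) {ε : ℝ} (hε : 0 < ε) (i : ι) :
    ∏ l, u l < ∏ l, (u + ε • Pi.single i 1 : ι → ℝ) l := by
  refine prod_lt_prod (fun l _ => hu l) (fun l _ => ?_) ⟨i, mem_univ i, by simp [hε]⟩
  by_cases h : l = i <;> simp [h, hε.le]

lemma prod_lt_prod_add_transfer {ι : Type*} [Fintype ι] [DecidableEq ι] {u : ι → ℝ}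
    (hu : ∀ l, 0 < u l) {i k : ι} {δ : ℝ} (hδ : 0 < δ) (hδk : δ < u k - u i) :
    ∏ l, u l < ∏ l, (u + δ • (Pi.single i 1 - Pi.single k 1) : ι → ℝ) l := by
  have hik : i ≠ k := by rintro rfl; linarith
  set u' := u + δ • (Pi.single i 1 - Pi.single k 1)
  have hk : k ∈ univ.erase i := mem_erase.2 ⟨hik.symm, mem_univ k⟩
  have split (f : ι → ℝ) : ∏ l, f l = f i * f k * ∏ l ∈ (univ.erase i).erase k, f l := by
    rw [mul_assoc, mul_prod_erase _ _ hk, mul_prod_erase _ _ (mem_univ i)]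
  have hrest : ∏ l ∈ (univ.erase i).erase k, u' l = ∏ l ∈ (univ.erase i).erase k, u l :=
    prod_congr rfl fun l hl => by
      obtain ⟨hlk, hli, -⟩ := by simpa only [mem_erase] using hl
      simp [u', hlk, hli]
  have hpair : u' i * u' k = u i * u k + δ * (u k - u i - δ) := by
    simp [u', hik, hik.symm]
    ring
  rw [split u, split u', hrest, hpair]
  exact mul_lt_mul_of_pos_right (by nlinarith) (prod_pos fun l _ => hu l)

variable {n : ℕ}

def HasTransferExchange (U : Set (Fin n → ℝ)) : Prop :=
  ∀ u ∈ U, ∀ u' ∈ U, ∀ i, u i < u' i → ∃ ε : ℝ, 0 < ε ∧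
    (u + ε • Pi.single i 1 ∈ U ∨
      ∃ k, u' k < u k ∧ u + ε • (Pi.single i 1 - Pi.single k 1) ∈ U)

theorem not_lexGt_of_forall_prod_le {U : Set (Fin n → ℝ)} (hconv : Convex ℝ U)
    (hexch : HasTransferExchange U) {u : Fin n → ℝ} (hu : u ∈ U) (hpos : ∀ i, 0 < u i)
    (hmax : ∀ u' ∈ U, (∀ i, 0 < u' i) → ∏ i, u' i ≤ ∏ i, u i) {u' : Fin n → ℝ}
    (hu' : u' ∈ U) : ¬ LexGt u' u := by
  intro hlex
  obtain ⟨i, hgain, hbelow⟩ := hlex.exists_gain_below_losses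
  obtain ⟨ε, hε, hsingle | ⟨k, hloss, htransfer⟩⟩ := hexch u hu u' hu' i hgain
  · refine (hmax _ hsingle fun l => ?_).not_gt (prod_lt_prod_add_single hpos hε i)
    simp only [Pi.add_apply, Pi.smul_apply, Pi.single_apply, smul_eq_mul]
    split_ifs <;> linarith [hpos l]
  · have hik := hbelow k hloss
    set δ := min ε ((u k - u i) / 2)
    have hδ : 0 < δ := lt_min hε (by linarith)
    have hδk : δ ≤ (u k - u i) / 2 := min_le_right _ _
    have hmem : u + δ • (Pi.single i 1 - Pi.single k 1) ∈ U := by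
      have := hconv.add_smul_mem hu htransfer
        ⟨div_nonneg hδ.le hε.le, div_le_one_of_le₀ (min_le_left _ _) hε.le⟩
      rwa [smul_smul, div_mul_cancel₀ _ hε.ne'] at this
    refine (hmax _ hmem fun l => ?_).not_gt (prod_lt_prod_add_transfer hpos hδ (by linarith))
    simp only [Pi.add_apply, Pi.smul_apply, Pi.sub_apply, Pi.single_apply, smul_eq_mul]
    have := hpos i
    split_ifs <;> subst_vars <;> linarith [hpos l]

lemma exists_forall_prod_le {U : Set (Fin n → ℝ)} (hcomp : IsCompact U) {u₀ : Fin n → ℝ}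
    (hu₀ : u₀ ∈ U) (hpos : ∀ i, 0 < u₀ i) :
    ∃ u ∈ U, (∀ i, 0 < u i) ∧ ∀ u' ∈ U, (∀ i, 0 < u' i) → ∏ i, u' i ≤ ∏ i, u i := by
  obtain ⟨u, ⟨hu, hnn⟩, hmax⟩ := (hcomp.inter_right isClosed_Ici).exists_isMaxOn
    ⟨u₀, hu₀, fun i => (hpos i).le⟩
    (continuous_finsetProd univ fun i _ => continuous_apply i).continuousOn
  have hle : ∀ u' ∈ U, (∀ i, 0 < u' i) → ∏ i, u' i ≤ ∏ i, u i :=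
    fun u' hu' h => hmax ⟨hu', fun i => (h i).le⟩
  have hprod : 0 < ∏ i, u i := (prod_pos fun i _ => hpos i).trans_le (hle u₀ hu₀ hpos)
  exact ⟨u, hu, fun i => (hnn i).lt_of_ne fun h => hprod.ne' (prod_eq_zero (mem_univ i) h.symm),
    hle⟩

theorem leximin_iff_forall_prod_le {U : Set (Fin n → ℝ)} (hconv : Convex ℝ U)
    (hcomp : IsCompact U) (hexch : HasTransferExchange U) {u : Fin n → ℝ} (hu : u ∈ U)
    (hpos : ∀ i, 0 < u i) :
    (∀ u' ∈ U, ¬ LexGt u' u) ↔ ∀ u' ∈ U, (∀ i, 0 < u' i) → ∏ i, u' i ≤ ∏ i, u i := by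
  refine ⟨fun hlex => ?_,
    fun hmax u' hu' => not_lexGt_of_forall_prod_le hconv hexch hu hpos hmax hu'⟩
  obtain ⟨w, hw, hwpos, hwmax⟩ := exists_forall_prod_le hcomp hu hpos
  have hsorted : sortedVal u = sortedVal w := by
    rcases sortedVal_eq_or_lexGt_or_lexGt u w with h | h | h
    · exact h
    · exact absurd h (not_lexGt_of_forall_prod_le hconv hexch hw hwpos hwmax hu)
    · exact absurd h (hlex w hw)
  intro u' hu' hpos'
  calc ∏ i, u' i ≤ ∏ i, w i := hwmax u' hu' hpos'
    _ = ∏ i, u i := by rw [← prod_sortedVal, ← hsorted, prod_sortedVal]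

end NashWelfare

section Allocation

variable {n m : ℕ}

def supplyPolytope (c : Fin m → ℝ) : Set (Fin n → Fin m → ℝ) :=
  {w | (∀ i j, 0 ≤ w i j) ∧ ∀ j, ∑ i, w i j ≤ c j}

def utility (v : Fin n → Fin m → ℝ) : (Fin n → Fin m → ℝ) →ₗ[ℝ] (Fin n → ℝ) where
  toFun w i := ∑ j, v i j * w i j
  map_add' w w' := by ext i; simp [mul_add, sum_add_distrib]
  map_smul' a w := by ext i; simp [mul_sum, mul_left_comm]

lemma utility_apply (v w : Fin n → Fin m → ℝ) (i : Fin n) :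
    utility v w i = ∑ j, v i j * w i j := rfl

def unitAlloc (b : Fin n) (j : Fin m) : Fin n → Fin m → ℝ :=
  fun l j' => if l = b ∧ j' = j then 1 else 0

lemma unitAlloc_nonneg (b : Fin n) (j : Fin m) (l : Fin n) (j' : Fin m) :
    0 ≤ unitAlloc b j l j' := by
  unfold unitAlloc; split_ifs <;> norm_num

lemma sum_unitAlloc (b : Fin n) (j j' : Fin m) :
    ∑ l, unitAlloc b j l j' = if j' = j then 1 else 0 := by
  by_cases h : j' = j <;> simp [unitAlloc, h]

lemma utility_unitAlloc (v : Fin n → Fin m → ℝ) (b : Fin n) (j : Fin m) :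
    utility v (unitAlloc b j) = Pi.single b (v b j) := by
  ext l
  by_cases h : l = b
  · subst h; simp [utility_apply, unitAlloc]
  · simp [utility_apply, unitAlloc, h]

lemma convex_supplyPolytope (c : Fin m → ℝ) : Convex ℝ (supplyPolytope (n := n) c) := by
  rintro w ⟨hw, hwc⟩ w' ⟨hw', hwc'⟩ a b ha hb hab
  refine ⟨fun i j => ?_, fun j => ?_⟩
  · simp only [Pi.add_apply, Pi.smul_apply, smul_eq_mul]
    nlinarith [hw i j, hw' i j]
  · simp only [Pi.add_apply, Pi.smul_apply, smul_eq_mul, sum_add_distrib, ← mul_sum]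
    have hc : a * c j + b * c j = c j := by rw [← add_mul, hab, one_mul]
    nlinarith [mul_le_mul_of_nonneg_left (hwc j) ha, mul_le_mul_of_nonneg_left (hwc' j) hb]

lemma isCompact_supplyPolytope (c : Fin m → ℝ) : IsCompact (supplyPolytope (n := n) c) := by
  have hclosed : IsClosed (supplyPolytope (n := n) c) := by
    simp only [supplyPolytope, Set.ofPred_and, Set.ofPred_forall]
    exact (isClosed_iInter fun i => isClosed_iInter fun j => isClosed_le continuous_const
      (by fun_prop)).inter (isClosed_iInter fun j => isClosed_le (by fun_prop) continuous_const)
  refine (isCompact_Icc (a := 0) (b := fun _ => c)).of_isClosed_subset hclosed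
    fun w hw => ⟨hw.1, fun i j =>
      (single_le_sum (fun l _ => hw.1 l j) (mem_univ i)).trans (hw.2 j)⟩

variable (v : Fin n → Fin m → ℝ) (d : Fin n → ℝ) (c : Fin m → ℝ)

lemma convex_image_supplyPolytope :
    Convex ℝ ((fun w => utility v w - d) '' supplyPolytope c) := by
  simpa only [Set.image_image, sub_eq_neg_add] using
    ((convex_supplyPolytope c).linear_image (utility v)).translate (-d)

lemma isCompact_image_supplyPolytope :
    IsCompact ((fun w => utility v w - d) '' supplyPolytope c) :=
  (isCompact_supplyPolytope c).image
    ((utility v).continuous_of_finiteDimensional.sub continuous_const)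

end Allocation

section Exchange

variable {n m : ℕ} {v : Fin n → Fin m → ℝ} {c : Fin m → ℝ}

def CanTakeFrom (v x : Fin n → Fin m → ℝ) (a b : Fin n) : Prop :=
  ∃ j, v a j = 1 ∧ v b j = 1 ∧ 0 < x b j

lemma exists_transfer_direction {x : Fin n → Fin m → ℝ} {i k : Fin n}
    (h : Relation.ReflTransGen (CanTakeFrom v x) i k) :
    ∃ D : Fin n → Fin m → ℝ, (∀ j, ∑ l, D l j = 0) ∧ (∀ l j, D l j < 0 → 0 < x l j) ∧
      utility v D = Pi.single i 1 - Pi.single k 1 := by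
  induction h with
  | refl => exact ⟨0, by simp, by simp, by simp⟩
  | @tail b q _ hbq ih =>
    obtain ⟨D, hsum, hneg, hD⟩ := ih
    obtain ⟨j, hb, hq, hx⟩ := hbq
    refine ⟨D + (unitAlloc b j - unitAlloc q j), fun j' => ?_, fun l j' h => ?_, ?_⟩
    · simp [sum_add_distrib, hsum, sum_unitAlloc]
    · by_cases hlj : l = q ∧ j' = j
      · obtain ⟨rfl, rfl⟩ := hlj
        exact hx
      · have hq0 : unitAlloc q j l j' = 0 := if_neg hlj
        simp only [Pi.add_apply, Pi.sub_apply, hq0] at h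
        exact hneg l j' (by linarith [unitAlloc_nonneg b j l j'])
    · rw [map_add, map_sub, hD, utility_unitAlloc, utility_unitAlloc, hb, hq]
      abel

lemma eventually_nonneg_add_mul {a b : ℝ} (ha : 0 ≤ a) (hb : b < 0 → 0 < a) :
    ∀ᶠ δ in 𝓝[>] (0 : ℝ), 0 ≤ a + δ * b := by
  rcases le_or_gt 0 b with hb0 | hb0
  · filter_upwards [self_mem_nhdsWithin] with δ hδ using add_nonneg ha (mul_nonneg hδ.le hb0)
  · have : Tendsto (fun δ => a + δ * b) (𝓝 0) (𝓝 a) := by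
      simpa using ((tendsto_id (x := 𝓝 (0 : ℝ))).mul_const b).const_add a
    exact nhdsWithin_le_nhds ((this.eventually (eventually_gt_nhds (hb hb0))).mono
      fun _ h => h.le)

lemma exists_add_smul_mem_supplyPolytope {x D : Fin n → Fin m → ℝ} (hx : x ∈ supplyPolytope c)
    (hneg : ∀ l j, D l j < 0 → 0 < x l j) (hsum : ∀ j, 0 < ∑ l, D l j → ∑ l, x l j < c j) :
    ∃ δ : ℝ, 0 < δ ∧ x + δ • D ∈ supplyPolytope c := by
  have hentries : ∀ᶠ δ in 𝓝[>] (0 : ℝ), ∀ l j, 0 ≤ x l j + δ * D l j :=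
    eventually_all.2 fun l => eventually_all.2 fun j =>
      eventually_nonneg_add_mul (hx.1 l j) (hneg l j)
  have hcols : ∀ᶠ δ in 𝓝[>] (0 : ℝ), ∀ j, 0 ≤ (c j - ∑ l, x l j) + δ * -∑ l, D l j :=
    eventually_all.2 fun j => eventually_nonneg_add_mul (sub_nonneg.2 (hx.2 j))
      fun h => sub_pos.2 (hsum j (neg_neg_iff_pos.1 h))
  obtain ⟨δ, ⟨he, hc⟩, hδ⟩ := ((hentries.and hcols).and self_mem_nhdsWithin).exists
  refine ⟨δ, hδ, fun l j => by simpa using he l j, fun j => ?_⟩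
  simp only [Pi.add_apply, Pi.smul_apply, smul_eq_mul, sum_add_distrib, ← mul_sum]
  linarith [hc j]

lemma exists_pruned (hv : ∀ i j, v i j = 0 ∨ v i j = 1) {w : Fin n → Fin m → ℝ}
    (hw : w ∈ supplyPolytope c) :
    ∃ w' ∈ supplyPolytope c, utility v w' = utility v w ∧ ∀ i j, v i j * w' i j = w' i j := by
  refine ⟨fun i j => v i j * w i j, ⟨fun i j => ?_, fun j => ?_⟩, ?_, fun i j => ?_⟩
  · rcases hv i j with h | h <;> simp [h, hw.1 i j]
  · refine (sum_le_sum fun i _ => ?_).trans (hw.2 j)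
    rcases hv i j with h | h <;> simp [h, hw.1 i j]
  · ext i
    rw [utility_apply, utility_apply]
    refine sum_congr rfl fun j _ => ?_
    rcases hv i j with h | h <;> simp [h]
  · rcases hv i j with h | h <;> simp [h]

lemma sum_utility_le_of_saturated (hv : ∀ i j, v i j = 0 ∨ v i j = 1)
    {x y : Fin n → Fin m → ℝ} (hx : x ∈ supplyPolytope c) (hy : y ∈ supplyPolytope c)
    (hpruned : ∀ l j, v l j * x l j = x l j) {R : Finset (Fin n)}
    (hsat : ∀ k ∈ R, ∀ j, v k j = 1 → ∑ l, x l j = c j ∧ ∀ l, 0 < x l j → l ∈ R) :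
    ∑ k ∈ R, utility v y k ≤ ∑ k ∈ R, utility v x k := by
  simp only [utility_apply]
  rw [sum_comm, sum_comm (s := R)]
  refine sum_le_sum fun j _ => ?_
  by_cases hj : ∃ k ∈ R, v k j = 1
  · obtain ⟨k, hk, hkj⟩ := hj
    obtain ⟨hfull, hclosed⟩ := hsat k hk j hkj
    calc ∑ l ∈ R, v l j * y l j ≤ ∑ l ∈ R, y l j := sum_le_sum fun l _ => by
            rcases hv l j with h | h <;> simp [h, hy.1 l j]
      _ ≤ ∑ l, y l j := sum_le_sum_of_subset_of_nonneg (subset_univ R) fun l _ _ => hy.1 l j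
      _ ≤ ∑ l, x l j := hfull ▸ hy.2 j
      _ = ∑ l ∈ R, x l j := (sum_subset (subset_univ R) fun l _ hl =>
            (hx.1 l j).eq_or_lt.resolve_right (mt (hclosed l) hl) |>.symm).symm
      _ = ∑ l ∈ R, v l j * x l j := sum_congr rfl fun l _ => (hpruned l j).symm
  · push Not at hj
    have hzero : ∀ l ∈ R, v l j = 0 := fun l hl => (hv l j).resolve_right (hj l hl)
    rw [sum_eq_zero fun l hl => by simp [hzero l hl],
      sum_eq_zero fun l hl => by simp [hzero l hl]]

lemma exists_improving_direction (hv : ∀ i j, v i j = 0 ∨ v i j = 1)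
    {x y : Fin n → Fin m → ℝ} (hx : x ∈ supplyPolytope c)
    (hpruned : ∀ l j, v l j * x l j = x l j) (hy : y ∈ supplyPolytope c) {i : Fin n}
    (hi : utility v x i < utility v y i) :
    ∃ D : Fin n → Fin m → ℝ, (∀ l j, D l j < 0 → 0 < x l j) ∧
      (∀ j, 0 < ∑ l, D l j → ∑ l, x l j < c j) ∧
      (utility v D = Pi.single i 1 ∨
        ∃ k, utility v y k < utility v x k ∧ utility v D = Pi.single i 1 - Pi.single k 1) := by
  classical
  set Reach := Relation.ReflTransGen (CanTakeFrom v x) i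
  by_cases hslack : ∃ k, Reach k ∧ ∃ j, v k j = 1 ∧ ∑ l, x l j < c j
  · obtain ⟨k, hik, j, hkj, hj⟩ := hslack
    obtain ⟨D, hsum, hneg, hD⟩ := exists_transfer_direction hik
    refine ⟨D + unitAlloc k j, fun l j' h => hneg l j' ?_, fun j' h => ?_, Or.inl ?_⟩
    · simp only [Pi.add_apply] at h
      linarith [unitAlloc_nonneg k j l j']
    · by_cases hj' : j' = j
      · exact hj' ▸ hj
      · simp [sum_add_distrib, hsum, sum_unitAlloc, hj'] at h
    · rw [map_add, hD, utility_unitAlloc, hkj, sub_add_cancel]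
  · -- The buyers reachable from `i` now hold all supply of every item they value, so no
    -- allocation gives them more in total: one of them must lose under `y`.
    push Not at hslack
    obtain ⟨k, hik, hk⟩ : ∃ k, Reach k ∧ utility v y k < utility v x k := by
      by_contra! hcon
      set R : Finset (Fin n) := {k | Reach k}
      have hR : ∀ k, k ∈ R ↔ Reach k := by simp [R]
      have hsat : ∀ k ∈ R, ∀ j, v k j = 1 → ∑ l, x l j = c j ∧ ∀ l, 0 < x l j → l ∈ R := by
        intro k hk j hkj
        refine ⟨le_antisymm (hx.2 j) (hslack k ((hR k).1 hk) j hkj), fun l hl => ?_⟩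
        have hlj : v l j = 1 := (mul_eq_right₀ hl.ne').1 (hpruned l j)
        exact (hR l).2 (((hR k).1 hk).tail ⟨j, hkj, hlj, hl⟩)
      have hlt : ∑ k ∈ R, utility v x k < ∑ k ∈ R, utility v y k :=
        sum_lt_sum (fun k hk => hcon k ((hR k).1 hk)) ⟨i, (hR i).2 .refl, hi⟩
      exact (sum_utility_le_of_saturated hv hx hy hpruned hsat).not_gt hlt
    obtain ⟨D, hsum, hneg, hD⟩ := exists_transfer_direction hik
    exact ⟨D, hneg, fun j h => absurd (hsum j) h.ne', Or.inr ⟨k, hk, hD⟩⟩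

lemma hasTransferExchange_image_supplyPolytope (hv : ∀ i j, v i j = 0 ∨ v i j = 1)
    (d : Fin n → ℝ) :
    HasTransferExchange ((fun w => utility v w - d) '' supplyPolytope c) := by
  rintro _ ⟨x₀, hx₀, rfl⟩ _ ⟨y, hy, rfl⟩ i hi
  obtain ⟨x, hx, hxu, hpruned⟩ := exists_pruned hv hx₀
  simp only at hi ⊢
  rw [← hxu] at hi ⊢
  obtain ⟨D, hneg, hsum, hD⟩ := exists_improving_direction hv hx hpruned hy (by simpa using hi)
  obtain ⟨δ, hδ, hmem⟩ := exists_add_smul_mem_supplyPolytope hx hneg hsum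
  have hmove : utility v (x + δ • D) - d = utility v x - d + δ • utility v D := by
    rw [map_add, map_smul]
    abel
  refine ⟨δ, hδ, ?_⟩
  rcases hD with hD | ⟨k, hk, hD⟩
  · exact Or.inl ⟨_, hmem, hmove.trans (by rw [hD])⟩
  · exact Or.inr ⟨k, by simpa using hk, _, hmem, hmove.trans (by rw [hD])⟩

end Exchange

section MultiPeriod

variable {n m T : ℕ} {st : Fin m → Fin T → ℝ} {s : Fin m → ℝ}

def aggregate (y : Fin n → Fin m → Fin T → ℝ) : Fin n → Fin m → ℝ :=
  fun i j => ∑ t, y i j t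

def pooledSupply (st : Fin m → Fin T → ℝ) (s : Fin m → ℝ) : Fin m → ℝ :=
  fun j => min (s j) (∑ t, st j t)

lemma utility_aggregate (v : Fin n → Fin m → ℝ) (y : Fin n → Fin m → Fin T → ℝ) :
    utility v (aggregate y) = fun i => ∑ t, ∑ j, v i j * y i j t := by
  ext i
  simp only [utility_apply, aggregate, mul_sum]
  exact sum_comm

lemma FeasibleMP.aggregate_mem {y : Fin n → Fin m → Fin T → ℝ} (hy : FeasibleMP n m T st s y) :
    aggregate y ∈ supplyPolytope (pooledSupply st s) := by
  refine ⟨fun i j => sum_nonneg fun t _ => hy.1 i j t, fun j => ?_⟩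
  simp only [aggregate, pooledSupply]
  rw [sum_comm]
  exact le_min (hy.2.2 j) (sum_le_sum fun t _ => hy.2.1 j t)

lemma exists_feasibleMP_aggregate_eq (hst : ∀ j t, 0 ≤ st j t) {w : Fin n → Fin m → ℝ}
    (hw : w ∈ supplyPolytope (pooledSupply st s)) :
    ∃ y, FeasibleMP n m T st s y ∧ aggregate y = w := by
  set S : Fin m → ℝ := fun j => ∑ t, st j t
  have hcol (j : Fin m) : ∑ i, w i j ≤ S j := (hw.2 j).trans (min_le_right _ _)
  have hS0 {i : Fin n} {j : Fin m} (h : S j = 0) : w i j = 0 :=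
    le_antisymm ((single_le_sum (fun l _ => hw.1 l j) (mem_univ i)).trans (h ▸ hcol j)) (hw.1 i j)
  -- Spread each share over time in proportion to supply; if `S j = 0` then `w i j = 0`, so the
  -- junk value of `st j t / 0` does no harm.
  set y : Fin n → Fin m → Fin T → ℝ := fun i j t => w i j * (st j t / S j)
  have hagg : aggregate y = w := by
    ext i j
    simp only [aggregate, y, ← mul_sum, ← sum_div]
    by_cases h : S j = 0
    · simp [hS0 h]
    · rw [div_self h, mul_one]
  refine ⟨y, ⟨fun i j t => mul_nonneg (hw.1 i j) (div_nonneg (hst j t) (sum_nonneg fun t _ =>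
    hst j t)), fun j t => ?_, fun j => ?_⟩, hagg⟩
  · simp only [y, ← sum_mul]
    by_cases h : S j = 0
    · simp [h, hst j t]
    · rw [mul_div_left_comm]
      exact mul_le_of_le_one_right (hst j t)
        ((div_le_one (lt_of_le_of_ne (sum_nonneg fun t _ => hst j t) (Ne.symm h))).2 (hcol j))
  · calc ∑ t, ∑ i, y i j t = ∑ i, w i j := by
          rw [sum_comm]; exact sum_congr rfl fun i _ => congrFun₂ hagg i j
      _ ≤ s j := (hw.2 j).trans (min_le_left _ _)

lemma image_feasibleMP_eq (v : Fin n → Fin m → ℝ) (d : Fin n → ℝ) (hst : ∀ j t, 0 ≤ st j t) :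
    (fun y i => (∑ t, ∑ j, v i j * y i j t) - d i) '' {y | FeasibleMP n m T st s y} =
      (fun w => utility v w - d) '' supplyPolytope (pooledSupply st s) := by
  ext u
  constructor
  · rintro ⟨y, hy, rfl⟩
    exact ⟨aggregate y, hy.aggregate_mem, by simp only [utility_aggregate]; rfl⟩
  · rintro ⟨w, hw, rfl⟩
    obtain ⟨y, hy, rfl⟩ := exists_feasibleMP_aggregate_eq hst hw
    exact ⟨y, hy, by simp only [utility_aggregate]; rfl⟩

end MultiPeriod

theorem leximin_iff_mnw_multi_period_general
    (n m T : ℕ) (v : Fin n → Fin m → ℝ) (d : Fin n → ℝ)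
    (st : Fin m → Fin T → ℝ) (s : Fin m → ℝ)
    (hv : ∀ i j, v i j = 0 ∨ v i j = 1)
    (x : Fin n → Fin m → Fin T → ℝ) (hxf : FeasibleMP n m T st s x)
    (hupos : ∀ i, 0 < (∑ t, ∑ j, v i j * x i j t) - d i) :
    (¬ ∃ y, FeasibleMP n m T st s y ∧
        LexGt (fun i => (∑ t, ∑ j, v i j * y i j t) - d i)
          (fun i => (∑ t, ∑ j, v i j * x i j t) - d i))
    ↔
    (∀ y, FeasibleMP n m T st s y →
      (∀ i, 0 < (∑ t, ∑ j, v i j * y i j t) - d i) →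
      ∏ i, ((∑ t, ∑ j, v i j * y i j t) - d i)
        ≤ ∏ i, ((∑ t, ∑ j, v i j * x i j t) - d i)) := by
  have hst : ∀ j t, 0 ≤ st j t := fun j t =>
    (sum_nonneg fun i _ => hxf.1 i j t).trans (hxf.2.1 j t)
  have hconv := convex_image_supplyPolytope v d (pooledSupply st s)
  have hcomp := isCompact_image_supplyPolytope v d (pooledSupply st s)
  have hexch := hasTransferExchange_image_supplyPolytope hv d (c := pooledSupply st s)
  rw [← image_feasibleMP_eq v d hst] at hconv hcomp hexch
  have key := leximin_iff_forall_prod_le hconv hcomp hexch (Set.mem_image_of_mem _ hxf) hupos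
  simpa [Set.forall_mem_image] using key

/-- In the multi-period sum-utility model with binary valuations and unit
budgets, under the assumption that some feasible allocation gives every buyer
strictly positive utility, a feasible allocation with positive utilities is
leximin-optimal iff it maximizes the Nash welfare. -/
theorem leximin_iff_mnw_multi_period
    (n m T : ℕ) (v : Fin n → Fin m → ℝ) (d : Fin n → ℝ)
    (st : Fin m → Fin T → ℝ) (s : Fin m → ℝ)
    (hv : ∀ i j, v i j = 0 ∨ v i j = 1) (hd : ∀ i, 0 ≤ d i)
    (hexist : ∃ y, FeasibleMP n m T st s y ∧
      ∀ i, 0 < (∑ t, ∑ j, v i j * y i j t) - d i)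
    (x : Fin n → Fin m → Fin T → ℝ) (hxf : FeasibleMP n m T st s x)
    (hupos : ∀ i, 0 < (∑ t, ∑ j, v i j * x i j t) - d i) :
    (¬ ∃ y, FeasibleMP n m T st s y ∧
        LexGt (fun i => (∑ t, ∑ j, v i j * y i j t) - d i)
          (fun i => (∑ t, ∑ j, v i j * x i j t) - d i))
    ↔
    (∀ y, FeasibleMP n m T st s y →
      (∀ i, 0 < (∑ t, ∑ j, v i j * y i j t) - d i) →
      ∏ i, ((∑ t, ∑ j, v i j * y i j t) - d i)
        ≤ ∏ i, ((∑ t, ∑ j, v i j * x i j t) - d i)) :=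
  leximin_iff_mnw_multi_period_general n m T v d st s hv x hxf hupos
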